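/- arXiv:2603.14582 — 8 statements merged into one kernel-verified Lean document; each statement's English description precedes it below -/
import Mathlib

section
/- For all (p,q), (p',q') ∈ ℤ², if Φ(p,q) = Φ(p',q') then (p',q') = (p,q) or (p',q') = (-p,-q), where Φ(p,q) = ((|p-q| - |p+q|)/2, |p| - |q|). In other words, Φ induces a bijection from ℤ²/±1 onto ℤ². -/
/-- The map `Φ : ℤ² → ℤ²`, `Φ(p,q) = ((|p-q| - |p+q|)/2, |p| - |q|)`. -/
def Phi (x : ℤ × ℤ) : ℤ × ℤ :=
  ((|x.1 - x.2| - |x.1 + x.2|) / 2, |x.1| - |x.2|)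

/-- if `Φ(p,q) = Φ(p',q')` then `(p',q') = (p,q)` or `(p',q') = (-p,-q)`. -/
theorem stmt3 (p q p' q' : ℤ) (h : Phi (p, q) = Phi (p', q')) :
    (p', q') = (p, q) ∨ (p', q') = (-p, -q) := by
  simp only [Phi, Prod.mk.injEq, Int.abs_eq_natAbs] at h ⊢
  omega
end

section
/- Let U = [[1,1],[0,1]] and L = [[1,0],[1,1]] in SL₂(ℤ). Then the subgroup Γ(2) of SL₂(ℤ) consisting of matrices congruent to the identity modulo 2 is generated by U², L², and -I. -/
/-!
Both `U²` and `L²` are `≡ I (mod 2)`, so the closure lies in `Γ(2)`. Conversely, for `A ∈ Γ(2)`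
the first column `(a, c)` has `a` odd and `c` even, so `|a| ≠ |c|`. Left multiplication by
`U^(2k)` replaces `a` by `a + 2kc`, and by `L^(2k)` replaces `c` by `c + 2ka`. When `c ≠ 0` one of
these strictly decreases `|a| + |c|`. The descent stops at `c = 0`, where `A = ±U^b` with `b` even.
-/

open Matrix

/-- The transvection `U = [[1,1],[0,1]]` in `SL₂(ℤ)`. -/
def Umat : Matrix.SpecialLinearGroup (Fin 2) ℤ :=
  ⟨!![1, 1; 0, 1], by norm_num [Matrix.det_fin_two_of]⟩

/-- The transvection `L = [[1,0],[1,1]]` in `SL₂(ℤ)`. -/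
def Lmat : Matrix.SpecialLinearGroup (Fin 2) ℤ :=
  ⟨!![1, 0; 1, 1], by norm_num [Matrix.det_fin_two_of]⟩

/-- `-I` in `SL₂(ℤ)`. -/
def negI : Matrix.SpecialLinearGroup (Fin 2) ℤ :=
  ⟨!![-1, 0; 0, -1], by norm_num [Matrix.det_fin_two_of]⟩

open ModularGroup CongruenceSubgroup MatrixGroups

lemma parity_iff_mem_Gamma_two (A : SL(2, ℤ)) :
    (Odd (A.1 0 0) ∧ Even (A.1 0 1) ∧ Even (A.1 1 0) ∧ Odd (A.1 1 1)) ↔ A ∈ Gamma 2 := by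
  simp only [Gamma_mem, ZMod.intCast_eq_one_iff_odd, ZMod.intCast_eq_zero_iff_even]

lemma Umat_eq_T : Umat = T := rfl

lemma negI_eq_neg_one : negI = -1 := by
  ext i j; fin_cases i <;> fin_cases j <;> rfl

lemma Lmat_eq_conj_T_inv : Lmat = S * T⁻¹ * S⁻¹ := by
  ext i j; fin_cases i <;> fin_cases j <;> simp [Lmat, coe_S, Matrix.adjugate_fin_two]

lemma coe_Lmat_zpow (n : ℤ) : (Lmat ^ n).1 = !![1, 0; n, 1] := by
  simp [Lmat_eq_conj_T_inv, conj_zpow, Matrix.SpecialLinearGroup.coe_inv, coe_S, coe_T_zpow,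
    Matrix.adjugate_fin_two]

lemma coe_Umat_zpow_mul (n : ℤ) (A : SL(2, ℤ)) :
    (Umat ^ n * A).1 = !![A 0 0 + n * A 1 0, A 0 1 + n * A 1 1; A 1 0, A 1 1] := by
  simp_rw [Matrix.SpecialLinearGroup.coe_mul, Umat_eq_T, coe_T_zpow]
  ext i j; fin_cases i <;> fin_cases j <;> simp [Matrix.mul_apply, Fin.sum_univ_two]

lemma coe_Lmat_zpow_mul (n : ℤ) (A : SL(2, ℤ)) :
    (Lmat ^ n * A).1 = !![A 0 0, A 0 1; A 1 0 + n * A 0 0, A 1 1 + n * A 0 1] := by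
  simp_rw [Matrix.SpecialLinearGroup.coe_mul, coe_Lmat_zpow]
  ext i j; fin_cases i <;> fin_cases j <;> simp [Matrix.mul_apply, Fin.sum_univ_two, add_comm]

lemma eq_Umat_zpow_of_unipotent {A : SL(2, ℤ)} (ha : A 0 0 = 1) (hc : A 1 0 = 0)
    (hd : A 1 1 = 1) : A = Umat ^ A 0 1 := by
  ext i j; fin_cases i <;> fin_cases j <;> simp [ha, hc, hd, Umat_eq_T, coe_T_zpow]

lemma Umat_sq_mem_Gamma_two : Umat ^ 2 ∈ Gamma 2 := by
  exact_mod_cast ModularGroup_T_pow_mem_Gamma 2 2 dvd_rfl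

lemma Lmat_sq_mem_Gamma_two : Lmat ^ 2 ∈ Gamma 2 := by
  simp_rw [← zpow_natCast, Gamma_mem, coe_Lmat_zpow]
  decide

lemma negI_mem_Gamma_two : negI ∈ Gamma 2 := by
  rw [negI_eq_neg_one, Gamma_mem]
  decide

local notation "𝒢" => Subgroup.closure ({Umat ^ 2, Lmat ^ 2, negI} : Set SL(2, ℤ))

lemma closure_le_Gamma_two : 𝒢 ≤ Gamma 2 := by
  simp only [Subgroup.closure_le, Set.insert_subset_iff, Set.singleton_subset_iff, SetLike.mem_coe]
  exact ⟨Umat_sq_mem_Gamma_two, Lmat_sq_mem_Gamma_two, negI_mem_Gamma_two⟩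

lemma Umat_zpow_two_mul_mem (k : ℤ) : Umat ^ (2 * k) ∈ 𝒢 := by
  rw [_root_.zpow_mul]
  exact zpow_mem (Subgroup.subset_closure (by simp)) k

lemma Lmat_zpow_two_mul_mem (k : ℤ) : Lmat ^ (2 * k) ∈ 𝒢 := by
  rw [_root_.zpow_mul]
  exact zpow_mem (Subgroup.subset_closure (by simp)) k

lemma negI_mem : negI ∈ 𝒢 := Subgroup.subset_closure (by simp)

lemma mem_closure_of_mem_Gamma_two_of_c_eq_zero {A : SL(2, ℤ)} (hA : A ∈ Gamma 2)
    (hc : A 1 0 = 0) : A ∈ 𝒢 := by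
  obtain ⟨-, ⟨k, hk⟩, -, -⟩ := (parity_iff_mem_Gamma_two A).2 hA
  have had : A 0 0 * A 1 1 = 1 := by
    have := A.det_coe
    rwa [Matrix.det_fin_two, hc, mul_zero, sub_zero] at this
  rcases Int.eq_one_or_neg_one_of_mul_eq_one' had with ⟨ha, hd⟩ | ⟨ha, hd⟩
  · rw [eq_Umat_zpow_of_unipotent ha hc hd]
    simpa [hk, ← two_mul] using Umat_zpow_two_mul_mem k
  · have hneg : -A = Umat ^ (2 * -k) := by
      rw [eq_Umat_zpow_of_unipotent (A := -A) (by simp [ha]) (by simp [hc]) (by simp [hd])]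
      congr 1
      simp [hk]
      ring
    rw [← neg_neg A, hneg, ← neg_one_mul, ← negI_eq_neg_one]
    exact mul_mem negI_mem (Umat_zpow_two_mul_mem _)

lemma exists_natAbs_add_two_mul_lt {x y : ℤ} (hy : y ≠ 0) (hyx : y.natAbs < x.natAbs) :
    ∃ k : ℤ, (x + 2 * k * y).natAbs < x.natAbs := by
  rcases le_or_gt 0 x with hx | hx <;> rcases le_or_gt 0 y with hy' | hy'
  exacts [⟨-1, by omega⟩, ⟨1, by omega⟩, ⟨1, by omega⟩, ⟨-1, by omega⟩]

lemma mem_closure_of_mem_Gamma_two (A : SL(2, ℤ)) (hA : A ∈ Gamma 2) : A ∈ 𝒢 := by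
  induction h : (A 0 0).natAbs + (A 1 0).natAbs using Nat.strong_induction_on generalizing A with
  | _ n ih =>
  by_cases hc : A 1 0 = 0
  · exact mem_closure_of_mem_Gamma_two_of_c_eq_zero hA hc
  have descend (W : SL(2, ℤ)) (hW : W ∈ 𝒢)
      (hlt : ((W * A) 0 0).natAbs + ((W * A) 1 0).natAbs < n) : A ∈ 𝒢 :=
    (Subgroup.mul_mem_cancel_left _ hW).1
      (ih _ hlt _ (mul_mem (closure_le_Gamma_two hW) hA) rfl)
  obtain ⟨⟨a, ha⟩, -, ⟨c, hc'⟩, -⟩ := (parity_iff_mem_Gamma_two A).2 hA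
  rcases Nat.lt_or_gt_of_ne (show (A 0 0).natAbs ≠ (A 1 0).natAbs by omega) with hlt | hlt
  · obtain ⟨k, hk⟩ := exists_natAbs_add_two_mul_lt (x := A 1 0) (by omega) hlt
    refine descend _ (Lmat_zpow_two_mul_mem k) ?_
    simp only [coe_Lmat_zpow_mul, of_apply, cons_val', cons_val_zero, cons_val_fin_one,
      cons_val_one]
    omega
  · obtain ⟨k, hk⟩ := exists_natAbs_add_two_mul_lt hc hlt
    refine descend _ (Umat_zpow_two_mul_mem k) ?_
    simp only [coe_Umat_zpow_mul, of_apply, cons_val', cons_val_zero, cons_val_fin_one,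
      cons_val_one]
    omega

/-- the congruence subgroup `Γ(2) = {A ∈ SL₂(ℤ) : A ≡ I (mod 2)}`
is generated by `U²`, `L²` and `-I`. -/
theorem stmt8 (A : Matrix.SpecialLinearGroup (Fin 2) ℤ) :
    (Odd (A.1 0 0) ∧ Even (A.1 0 1) ∧ Even (A.1 1 0) ∧ Odd (A.1 1 1)) ↔
      A ∈ Subgroup.closure ({Umat ^ 2, Lmat ^ 2, negI} :
        Set (Matrix.SpecialLinearGroup (Fin 2) ℤ)) := by
  rw [parity_iff_mem_Gamma_two]
  exact ⟨mem_closure_of_mem_Gamma_two A, fun h => closure_le_Gamma_two h⟩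
end

section
/- Let m, n be coprime integers with mn even. Then there exists a finite sequence of even integers q₀, q₁, ..., q_r with qᵢ ≠ 0 for i > 0, such that m/n = q₀ + 1/(q₁ + 1/(... + 1/q_r)) as a continued fraction, and r ≡ m (mod 2). -/
def cfVal : List ℤ → ℚ
  | [] => 0
  | [a] => (a : ℚ)
  | a :: b :: l => (a : ℚ) + (cfVal (b :: l))⁻¹

/-!
Divide with the nearest *even* multiple, `m = 2kn + s` with `-|n| ≤ s < |n|`.
Then `m/n = 2k + 1/(n/s)`, and the pair `(n, s)` is again coprime with `ns` even, so induction on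
`|n|` expands `n/s`. The quotient `2k` is nonzero as soon as `|n| < |m|`, which is what keeps
the later partial quotients nonzero. The expansion stops when `n ∣ m`, i.e. `n = ±1`, and then
`m` is even. Since exactly one of `m, n` is odd, `m ≡ n + 1 (mod 2)`, matching the length
growing by one at each step.
-/

theorem Int.exists_eq_two_mul_mul_add (m n : ℤ) (hn : n ≠ 0) :
    ∃ k s, m = 2 * n * k + s ∧ -|n| ≤ s ∧ s < |n| := by
  have hpos : 0 < 2 * |n| := by positivity
  refine ⟨(m + |n|) / (2 * |n|) * n.sign, (m + |n|) % (2 * |n|) - |n|, ?_, ?_, ?_⟩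
  · have hsign : n * n.sign = |n| := by rw [Int.mul_sign_self, Int.abs_eq_natAbs]
    have := Int.emod_add_mul_ediv (m + |n|) (2 * |n|)
    rw [← hsign] at this ⊢
    linear_combination -this
  · linarith [Int.emod_nonneg (m + |n|) hpos.ne']
  · linarith [Int.emod_lt_of_pos (m + |n|) hpos]

theorem Int.odd_add_of_isCoprime_of_even_mul {m n : ℤ} (hcop : IsCoprime m n)
    (he : Even (m * n)) : Odd (m + n) := by
  have not_both_even (hm : Even m) (hn : Even n) : False := by
    have h2 := hcop.isUnit_of_dvd' (even_iff_two_dvd.1 hm) (even_iff_two_dvd.1 hn)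
    norm_num [Int.isUnit_iff] at h2
  rw [Int.odd_add, ← Int.not_even_iff_odd]
  rcases Int.even_mul.1 he with hm | hn
  · exact iff_of_false (· hm) (not_both_even hm)
  · exact iff_of_true (not_both_even · hn) hn

lemma cfVal_cons (a : ℤ) {L : List ℤ} (hL : L ≠ []) :
    cfVal (a :: L) = a + (cfVal L)⁻¹ := by
  match L, hL with
  | _ :: _, _ => rfl

structure IsEvenCF (q : List ℤ) : Prop where
  ne_nil : q ≠ []
  even : ∀ x ∈ q, Even x
  tail_ne_zero : ∀ x ∈ q.tail, x ≠ 0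

lemma isEvenCF_singleton {a : ℤ} (ha : Even a) : IsEvenCF [a] :=
  ⟨List.cons_ne_nil _ _, by simpa using ha, by simp⟩

lemma IsEvenCF.cons {a : ℤ} {L : List ℤ} (ha : Even a) (hL : IsEvenCF L) (h0 : 0 ∉ L) :
    IsEvenCF (a :: L) where
  ne_nil := List.cons_ne_nil _ _
  even := by simpa [ha] using hL.even
  tail_ne_zero x hx := by rintro rfl; exact h0 hx

lemma List.get_mem_tail_of_pos {α : Type*} {q : List α} {i : ℕ} (hi : 0 < i)
    (h : i < q.length) : q.get ⟨i, h⟩ ∈ q.tail := by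
  obtain ⟨j, rfl⟩ := Nat.exists_eq_add_of_lt hi
  cases q with
  | nil => simp at h
  | cons a l => simp

lemma exists_isEvenCF_of_dvd {m n : ℤ} (hcop : IsCoprime m n) (he : Even (m * n)) (hdvd : n ∣ m) :
    ∃ q : List ℤ, IsEvenCF q ∧ cfVal q = m / n ∧ (q.length - 1 : ℤ) ≡ m [ZMOD 2] ∧
      (|n| < |m| → 0 ∉ q) := by
  have hunit : n = 1 ∨ n = -1 := Int.isUnit_iff.1 (hcop.isUnit_of_dvd' hdvd dvd_rfl)
  have hm : Even m := by
    rcases Int.even_mul.1 he with h | h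
    · exact h
    · rcases hunit with rfl | rfl <;> norm_num at h
  refine ⟨[m * n], isEvenCF_singleton (hm.mul_right n), ?_, ?_, ?_⟩
  · rcases hunit with rfl | rfl <;> simp [cfVal, div_neg]
  · have := Int.even_iff.1 hm
    simp only [Int.ModEq, List.length_singleton]
    omega
  · intro hlt
    have hm0 : m ≠ 0 := abs_pos.1 ((abs_nonneg n).trans_lt hlt)
    have hn0 : n ≠ 0 := by rcases hunit with rfl | rfl <;> norm_num
    simpa using (mul_ne_zero hm0 hn0).symm

theorem exists_isEvenCF (m n : ℤ) (hn : n ≠ 0) (hcop : IsCoprime m n) (he : Even (m * n)) :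
    ∃ q : List ℤ, IsEvenCF q ∧ cfVal q = m / n ∧ (q.length - 1 : ℤ) ≡ m [ZMOD 2] ∧
      (|n| < |m| → 0 ∉ q) := by
  by_cases hdvd : n ∣ m
  · exact exists_isEvenCF_of_dvd hcop he hdvd
  obtain ⟨k, s, hm, hs_lo, hs_hi⟩ := Int.exists_eq_two_mul_mul_add m n hn
  have hns : ¬ n ∣ s := fun h ↦
    hdvd (hm ▸ (dvd_mul_of_dvd_left (dvd_mul_left n 2) k).add h)
  have hs0 : s ≠ 0 := by rintro rfl; exact hns (dvd_zero n)
  have hs_abs : |s| < |n| := by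
    have : s ≠ -|n| := by rintro rfl; exact hns (by simp)
    rw [abs_lt]; constructor <;> omega
  have hcop' : IsCoprime n s :=
    (IsCoprime.of_add_mul_left_left (z := 2 * k) (by convert hcop using 1; linarith)).symm
  have he' : Even (n * s) := by
    rcases Int.even_mul.1 he with h | h
    · have : s = m - 2 * (n * k) := by rw [hm]; ring
      exact (this ▸ h.sub (even_two_mul _)).mul_left n
    · exact h.mul_right s
  obtain ⟨L, hL, hval, hpar, hL0⟩ := exists_isEvenCF n s hs0 hcop' he'
  refine ⟨2 * k :: L, hL.cons (even_two_mul k) (hL0 hs_abs), ?_, ?_, ?_⟩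
  · have hnQ : (n : ℚ) ≠ 0 := Int.cast_ne_zero.2 hn
    rw [cfVal_cons _ hL.ne_nil, hval, inv_div, hm]
    push_cast
    field_simp
  · obtain ⟨c, hc⟩ := Int.odd_add_of_isCoprime_of_even_mul hcop he
    simp only [Int.ModEq, List.length_cons] at hpar ⊢
    push_cast
    omega
  · intro hlt
    have hk : k ≠ 0 := by
      rintro rfl
      rw [hm, mul_zero, zero_add] at hlt
      exact lt_asymm hlt hs_abs
    simpa [eq_comm, hk] using hL0 hs_abs
termination_by n.natAbs
decreasing_by
  rw [Int.abs_eq_natAbs, Int.abs_eq_natAbs] at hs_abs; omega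

/-- for coprime `m, n` with `m*n` even (and `n ≠ 0`), there is an
even continued fraction presentation `m/n = [q₀,…,q_r]` with all `qᵢ` even,
`qᵢ ≠ 0` for `i > 0`, and `r ≡ m (mod 2)`. -/
theorem stmt10 (m n : ℤ) (hn : n ≠ 0) (hcop : IsCoprime m n) (he : Even (m * n)) :
    ∃ q : List ℤ, q ≠ [] ∧ (∀ x ∈ q, Even x) ∧
      (∀ i : ℕ, 0 < i → ∀ h : i < q.length, q.get ⟨i, h⟩ ≠ 0) ∧
      cfVal q = (m : ℚ) / (n : ℚ) ∧
      ((q.length : ℤ) - 1) % 2 = m % 2 := by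
  obtain ⟨q, hq, hval, hpar, -⟩ := exists_isEvenCF m n hn hcop he
  exact ⟨q, hq.ne_nil, hq.even,
    fun i hi h ↦ hq.tail_ne_zero _ (List.get_mem_tail_of_pos hi h), hval, hpar⟩
end

section
/- The action of the subgroup Γ̄(2) = ⟨U², L²⟩ ≤ SL₂(ℤ) on the set of primitive vectors of ℤ² has exactly 5 orbits, represented by (0,1), (0,-1), (1,0), (-1,0), and (1,1). Explicitly, the orbits are: {(p,q) primitive : p even, q ≡ 1 mod 4}, {(p,q) primitive : p even, q ≡ -1 mod 4}, {(p,q) primitive : q even, p ≡ 1 mod 4}, {(p,q) primitive : q even, p ≡ -1 mod 4}, and {(p,q) primitive : p, q both odd}. -/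
/-!
Every element of `Γ̄(2) = ⟨U², L²⟩` is congruent to the identity mod 2 and has both diagonal
entries `≡ 1 mod 4`, since these matrices form a subgroup containing `U²` and `L²`. The images of
`(0, ±1)`, `(±1, 0)` and `(1, 1)` under such a matrix are, up to sign, its second column, its first
column and the sum of its columns, so each of the five classes is invariant, and they are
pairwise disjoint. Conversely, `U^{±2}` and `L^{±2}` change one coordinate by twice the other, which
strictly decreases `|p| + |q|` until both coordinates lie in `{-1, 0, 1}`; the eight primitive
vectors left are each one of the representatives or one or two moves away from `(1, 1)`.
-/

open Matrix

/-- `Γ̄(2) = ⟨U², L²⟩` as a subgroup of `SL₂(ℤ)`. -/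
def GammaBar2 : Subgroup (Matrix.SpecialLinearGroup (Fin 2) ℤ) :=
  Subgroup.closure {Umat ^ 2, Lmat ^ 2}

/-- `v` and `w` lie in the same `Γ̄(2)`-orbit. -/
def sameOrbit (v w : Fin 2 → ℤ) : Prop :=
  ∃ A ∈ GammaBar2, A.1.mulVec v = w

namespace sameOrbit

theorem refl (v : Fin 2 → ℤ) : sameOrbit v v :=
  ⟨1, one_mem _, by simp⟩

theorem symm {v w : Fin 2 → ℤ} (h : sameOrbit v w) : sameOrbit w v := by
  obtain ⟨A, hA, rfl⟩ := h
  refine ⟨A⁻¹, inv_mem hA, ?_⟩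
  rw [mulVec_mulVec, ← Matrix.SpecialLinearGroup.coe_mul, inv_mul_cancel,
    Matrix.SpecialLinearGroup.coe_one, one_mulVec]

theorem trans {u v w : Fin 2 → ℤ} (h₁ : sameOrbit u v) (h₂ : sameOrbit v w) : sameOrbit u w := by
  obtain ⟨A, hA, rfl⟩ := h₁
  obtain ⟨B, hB, rfl⟩ := h₂
  exact ⟨B * A, mul_mem hB hA, by rw [Matrix.SpecialLinearGroup.coe_mul, mulVec_mulVec]⟩

end sameOrbit

theorem coe_Umat_sq : (Umat : Matrix (Fin 2) (Fin 2) ℤ) ^ 2 = !![1, 2; 0, 1] := by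
  decide

theorem coe_Lmat_sq : (Lmat : Matrix (Fin 2) (Fin 2) ℤ) ^ 2 = !![1, 0; 2, 1] := by
  decide

theorem sameOrbit_fst_add (p q : ℤ) : sameOrbit ![p, q] ![p + 2 * q, q] := by
  refine ⟨Umat ^ 2, Subgroup.subset_closure (by simp), ?_⟩
  ext i
  fin_cases i <;> simp [coe_Umat_sq, mulVec]

theorem sameOrbit_snd_add (p q : ℤ) : sameOrbit ![p, q] ![p, q + 2 * p] := by
  refine ⟨Lmat ^ 2, Subgroup.subset_closure (by simp), ?_⟩
  ext i
  fin_cases i <;> simp [coe_Lmat_sq, mulVec, add_comm]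

def gamma2DiagOneModFour : Subgroup (SpecialLinearGroup (Fin 2) ℤ) where
  carrier := {A | A 0 0 ≡ 1 [ZMOD 4] ∧ 2 ∣ A 0 1 ∧ 2 ∣ A 1 0 ∧ A 1 1 ≡ 1 [ZMOD 4]}
  one_mem' := by simp [Int.ModEq]
  mul_mem' := by
    rintro A B ⟨ha, hb, hc, hd⟩ ⟨ha', hb', hc', hd'⟩
    have h4 {x y : ℤ} (hx : 2 ∣ x) (hy : 2 ∣ y) : x * y ≡ 0 [ZMOD 4] :=
      Int.modEq_zero_iff_dvd.2 (by simpa using mul_dvd_mul hx hy)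
    simp only [Set.mem_ofPred_eq, Matrix.SpecialLinearGroup.coe_mul, mul_apply, Fin.sum_univ_two]
    refine ⟨by simpa using (ha.mul ha').add (h4 hb hc'), ?_, ?_,
      by simpa using (h4 hc hb').add (hd.mul hd')⟩
    · exact dvd_add (dvd_mul_of_dvd_right hb' _) (dvd_mul_of_dvd_left hb _)
    · exact dvd_add (dvd_mul_of_dvd_left hc _) (dvd_mul_of_dvd_right hc' _)
  inv_mem' := by
    rintro A ⟨ha, hb, hc, hd⟩
    simpa [Matrix.SpecialLinearGroup.coe_inv, adjugate_fin_two] using ⟨hd, hb, hc, ha⟩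

theorem gammaBar2_le_gamma2DiagOneModFour : GammaBar2 ≤ gamma2DiagOneModFour := by
  refine (Subgroup.closure_le _).2 ?_
  rintro A (rfl | rfl) <;>
    simp [gamma2DiagOneModFour, coe_Umat_sq, coe_Lmat_sq, Int.ModEq]

def orbitRep : Fin 5 → Fin 2 → ℤ := ![![0, 1], ![0, -1], ![1, 0], ![-1, 0], ![1, 1]]

def OrbitClass : Fin 5 → ℤ → ℤ → Prop
  | 0, p, q => Even p ∧ q % 4 = 1
  | 1, p, q => Even p ∧ q % 4 = 3
  | 2, p, q => Even q ∧ p % 4 = 1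
  | 3, p, q => Even q ∧ p % 4 = 3
  | 4, p, q => Odd p ∧ Odd q

theorem OrbitClass.unique {i j : Fin 5} {p q : ℤ} (hi : OrbitClass i p q)
    (hj : OrbitClass j p q) : i = j := by
  fin_cases i <;> fin_cases j <;> simp only [OrbitClass, Int.even_iff, Int.odd_iff] at hi hj <;>
    first | rfl | omega

theorem OrbitClass.of_sameOrbit {i : Fin 5} {p q : ℤ} (h : sameOrbit (orbitRep i) ![p, q]) :
    OrbitClass i p q := by
  obtain ⟨A, hA, hAv⟩ := h
  obtain ⟨ha, hb, hc, hd⟩ := gammaBar2_le_gamma2DiagOneModFour hA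
  have hp := congrFun hAv 0
  have hq := congrFun hAv 1
  fin_cases i <;>
    simp [orbitRep, OrbitClass, mulVec, dotProduct, Fin.sum_univ_two, Int.even_iff, Int.odd_iff,
      Int.ModEq] at ha hd hp hq ⊢ <;> omega

theorem exists_sameOrbit_orbitRep_of_natAbs_le_one {p q : ℤ} (hpq : IsCoprime p q)
    (hp : p.natAbs ≤ 1) (hq : q.natAbs ≤ 1) : ∃ i, sameOrbit (orbitRep i) ![p, q] := by
  obtain rfl | rfl | rfl : p = -1 ∨ p = 0 ∨ p = 1 := by omega
  all_goals obtain rfl | rfl | rfl : q = -1 ∨ q = 0 ∨ q = 1 := by omega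
  · exact ⟨4, by
      simpa [orbitRep] using (sameOrbit_fst_add (-1) 1).symm.trans (sameOrbit_snd_add (-1) 1)⟩
  · exact ⟨3, .refl _⟩
  · exact ⟨4, by simpa [orbitRep] using (sameOrbit_fst_add (-1) 1).symm⟩
  · exact ⟨1, .refl _⟩
  · exact absurd (isCoprime_zero_left.1 hpq) not_isUnit_zero
  · exact ⟨0, .refl _⟩
  · exact ⟨4, by simpa [orbitRep] using (sameOrbit_snd_add 1 (-1)).symm⟩
  · exact ⟨2, .refl _⟩
  · exact ⟨4, .refl _⟩

theorem exists_sameOrbit_natAbs_lt {p q : ℤ} (hpq : IsCoprime p q)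
    (h : 2 ≤ p.natAbs ∨ 2 ≤ q.natAbs) : ∃ p' q', IsCoprime p' q' ∧
      p'.natAbs + q'.natAbs < p.natAbs + q.natAbs ∧ sameOrbit ![p', q'] ![p, q] := by
  have hgcd : Nat.gcd p.natAbs q.natAbs = 1 := Int.isCoprime_iff_gcd_eq_one.1 hpq
  have hp : p ≠ 0 := by rintro rfl; simp only [Int.natAbs_zero, Nat.gcd_zero_left] at hgcd; omega
  have hq : q ≠ 0 := by rintro rfl; simp only [Int.natAbs_zero, Nat.gcd_zero_right] at hgcd; omega
  have hne : p.natAbs ≠ q.natAbs := by intro he; rw [he, Nat.gcd_self] at hgcd; omega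
  rcases hne.lt_or_gt with hlt | hlt
  · obtain hdec | hdec : (q - 2 * p).natAbs < q.natAbs ∨ (q + 2 * p).natAbs < q.natAbs := by
      omega
    · exact ⟨p, q - 2 * p, by simpa using hpq, by omega,
        by simpa using sameOrbit_snd_add p (q - 2 * p)⟩
    · exact ⟨p, q + 2 * p, by simpa using hpq, by omega, (sameOrbit_snd_add p q).symm⟩
  · obtain hdec | hdec : (p - 2 * q).natAbs < p.natAbs ∨ (p + 2 * q).natAbs < p.natAbs := by
      omega
    · exact ⟨p - 2 * q, q, by simpa using hpq, by omega,
        by simpa using sameOrbit_fst_add (p - 2 * q) q⟩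
    · exact ⟨p + 2 * q, q, by simpa using hpq, by omega, (sameOrbit_fst_add p q).symm⟩

theorem exists_sameOrbit_orbitRep {p q : ℤ} (hpq : IsCoprime p q) :
    ∃ i, sameOrbit (orbitRep i) ![p, q] := by
  by_cases hsmall : p.natAbs ≤ 1 ∧ q.natAbs ≤ 1
  · exact exists_sameOrbit_orbitRep_of_natAbs_le_one hpq hsmall.1 hsmall.2
  · obtain ⟨p', q', hpq', hlt, hrel⟩ := exists_sameOrbit_natAbs_lt hpq (by omega)
    obtain ⟨i, hi⟩ := exists_sameOrbit_orbitRep hpq'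
    exact ⟨i, hi.trans hrel⟩
termination_by p.natAbs + q.natAbs

theorem sameOrbit_orbitRep_iff {p q : ℤ} (hpq : IsCoprime p q) (i : Fin 5) :
    sameOrbit (orbitRep i) ![p, q] ↔ OrbitClass i p q := by
  refine ⟨OrbitClass.of_sameOrbit, fun hi => ?_⟩
  obtain ⟨j, hj⟩ := exists_sameOrbit_orbitRep hpq
  obtain rfl := hi.unique (OrbitClass.of_sameOrbit hj)
  exact hj

/-- the `Γ̄(2)`-action on primitive vectors has exactly 5 orbits,
represented by `(0,1)`, `(0,-1)`, `(1,0)`, `(-1,0)`, `(1,1)`, which are explicitly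
described by parity/mod 4 conditions. -/
theorem stmt14 (p q : ℤ) (hprim : IsCoprime p q) :
    (sameOrbit ![0, 1] ![p, q] ↔ (Even p ∧ q % 4 = 1)) ∧
    (sameOrbit ![0, -1] ![p, q] ↔ (Even p ∧ q % 4 = 3)) ∧
    (sameOrbit ![1, 0] ![p, q] ↔ (Even q ∧ p % 4 = 1)) ∧
    (sameOrbit ![-1, 0] ![p, q] ↔ (Even q ∧ p % 4 = 3)) ∧
    (sameOrbit ![1, 1] ![p, q] ↔ (Odd p ∧ Odd q)) :=
  ⟨sameOrbit_orbitRep_iff hprim 0, sameOrbit_orbitRep_iff hprim 1, sameOrbit_orbitRep_iff hprim 2,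
    sameOrbit_orbitRep_iff hprim 3, sameOrbit_orbitRep_iff hprim 4⟩
end

section
/- The matrix A₁ = [[5,-4],[4,-3]] satisfies A₁ = U²L⁻²U²L⁻² where U = [[1,1],[0,1]], L = [[1,0],[1,1]], and A₁ fixes the vector (1,1). Moreover, every matrix A ∈ SL₂(ℤ) of the form [[4k+1, 2n],[2m, 4ℓ+1]] fixing (1,1) is a power of A₁: A = A₁ᵐ for some m ∈ ℤ, with Aₘ = [[4m+1, -4m],[4m, 1-4m]]. -/
open Matrix

/-- `A₁ = [[5,-4],[4,-3]]` in `SL₂(ℤ)`. -/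
def A1 : Matrix.SpecialLinearGroup (Fin 2) ℤ :=
  ⟨!![5, -4; 4, -3], by norm_num [Matrix.det_fin_two_of]⟩

/-!
A matrix `[[a, b], [c, d]]` fixing `(1, 1)` has rows summing to `1`, and then
`det = a + d - 1`, so `det = 1` makes it the transvection `N t = 1 + t • [[1, -1], [1, -1]]`
(`transvecOneOne t`) with `t = a - 1`. The nilpotent `[[1, -1], [1, -1]]` squares to zero, so
`t ↦ N t` is a homomorphism from `(R, +)`; as `A₁ = N 4` we get `A₁ ^ m = N (4 * m)`, and
`a ≡ 1 [ZMOD 4]` says exactly that `t ∈ 4ℤ`.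
-/

namespace Matrix.SpecialLinearGroup

variable {R : Type*} [CommRing R]

def transvecOneOne (t : R) : SpecialLinearGroup (Fin 2) R :=
  ⟨!![1 + t, -t; t, 1 - t], by simp [det_fin_two_of]; ring⟩

@[simp]
lemma coe_transvecOneOne (t : R) :
    (transvecOneOne t : Matrix (Fin 2) (Fin 2) R) = !![1 + t, -t; t, 1 - t] := rfl

lemma transvecOneOne_mul (s t : R) :
    transvecOneOne s * transvecOneOne t = transvecOneOne (s + t) := by
  ext i j
  fin_cases i <;> fin_cases j <;> simp [mul_apply, Fin.sum_univ_two] <;> ring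

def transvecOneOneHom : Multiplicative R →* SpecialLinearGroup (Fin 2) R where
  toFun t := transvecOneOne t.toAdd
  map_one' := by ext i j; fin_cases i <;> fin_cases j <;> simp
  map_mul' s t := (transvecOneOne_mul s.toAdd t.toAdd).symm

lemma transvecOneOne_zpow (t : R) (m : ℤ) :
    transvecOneOne t ^ m = transvecOneOne (m * t) := by
  simpa [transvecOneOneHom] using (map_zpow transvecOneOneHom (Multiplicative.ofAdd t) m).symm

lemma transvecOneOne_mulVec (t : R) :
    (transvecOneOne t : Matrix (Fin 2) (Fin 2) R) *ᵥ ![1, 1] = ![1, 1] := by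
  ext i
  fin_cases i <;> simp [mulVec, dotProduct, Fin.sum_univ_two]

lemma eq_transvecOneOne_of_mulVec_eq {A : SpecialLinearGroup (Fin 2) R}
    (hA : (A : Matrix (Fin 2) (Fin 2) R) *ᵥ ![1, 1] = ![1, 1]) :
    A = transvecOneOne (A 0 0 - 1) := by
  have hrow0 : A 0 0 + A 0 1 = 1 := by
    simpa [mulVec, dotProduct, Fin.sum_univ_two] using congrFun hA 0
  have hrow1 : A 1 0 + A 1 1 = 1 := by
    simpa [mulVec, dotProduct, Fin.sum_univ_two] using congrFun hA 1
  have hdet : A 0 0 * A 1 1 - A 0 1 * A 1 0 = 1 := by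
    rw [← det_fin_two]
    exact A.det_coe
  have htrace : A 0 0 + A 1 1 = 2 := by
    rw [eq_sub_of_add_eq' hrow0, eq_sub_of_add_eq hrow1] at hdet
    linear_combination hdet
  ext i j
  fin_cases i <;> fin_cases j <;> simp
  · linear_combination hrow0
  · linear_combination hrow1 - htrace
  · linear_combination htrace

end Matrix.SpecialLinearGroup

open Matrix.SpecialLinearGroup

lemma coe_Lmat_zpow_neg_two :
    ((Lmat ^ (-2 : ℤ) : Matrix.SpecialLinearGroup (Fin 2) ℤ) : Matrix (Fin 2) (Fin 2) ℤ) =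
      !![1, 0; -2, 1] := by
  simp only [_root_.zpow_neg, zpow_ofNat, coe_inv, coe_pow]
  simp [Lmat, sq, adjugate_fin_two]

lemma A1_eq_Umat_sq_mul_Lmat_zpow_neg_two :
    A1 = Umat ^ 2 * Lmat ^ (-2 : ℤ) * Umat ^ 2 * Lmat ^ (-2 : ℤ) := by
  ext i j
  simp only [coe_mul, coe_pow, coe_Lmat_zpow_neg_two]
  fin_cases i <;> fin_cases j <;> simp [Umat, A1, sq]

lemma A1_eq_transvecOneOne : A1 = transvecOneOne 4 := by
  ext i j
  fin_cases i <;> fin_cases j <;> simp [A1]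

lemma A1_zpow (m : ℤ) : A1 ^ m = transvecOneOne (4 * m) := by
  rw [A1_eq_transvecOneOne, transvecOneOne_zpow, Int.cast_id, mul_comm]

lemma coe_A1_zpow (m : ℤ) :
    ((A1 ^ m : Matrix.SpecialLinearGroup (Fin 2) ℤ) : Matrix (Fin 2) (Fin 2) ℤ) =
      !![4 * m + 1, -4 * m; 4 * m, 1 - 4 * m] := by
  rw [A1_zpow, coe_transvecOneOne]
  ring_nf

/-- `A₁ = U²L⁻²U²L⁻²`, `A₁` fixes `(1,1)`, and every
`A = [[4k+1,2n],[2m,4ℓ+1]] ∈ SL₂(ℤ)` fixing `(1,1)` equals `A₁^m` for some `m ∈ ℤ`,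
with matrix `[[4m+1,-4m],[4m,1-4m]]`. -/
theorem stmt15 :
    A1 = Umat ^ 2 * Lmat ^ (-2 : ℤ) * Umat ^ 2 * Lmat ^ (-2 : ℤ) ∧
    A1.1.mulVec ![1, 1] = ![1, 1] ∧
    ∀ A : Matrix.SpecialLinearGroup (Fin 2) ℤ,
      (A.1 0 0 % 4 = 1 ∧ A.1 1 1 % 4 = 1 ∧ Even (A.1 0 1) ∧ Even (A.1 1 0)) →
      A.1.mulVec ![1, 1] = ![1, 1] →
      ∃ m : ℤ, A = A1 ^ m ∧ A.1 = !![4 * m + 1, -4 * m; 4 * m, 1 - 4 * m] := by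
  refine ⟨A1_eq_Umat_sq_mul_Lmat_zpow_neg_two, ?_, ?_⟩
  · rw [A1_eq_transvecOneOne]
    exact transvecOneOne_mulVec 4
  · rintro A ⟨h00, -, -, -⟩ hfix
    obtain ⟨m, hm⟩ : (4 : ℤ) ∣ A.1 0 0 - 1 := by omega
    have hA : A = A1 ^ m := by
      rw [eq_transvecOneOne_of_mulVec_eq hfix, hm, A1_zpow]
    exact ⟨m, hA, hA ▸ coe_A1_zpow m⟩
end

section
/- Define t_c : ℤ² → ℤ² piecewise by t_c(a,b) = (b-a, -b) if a ≥ 0 and b ≤ a; (b-a, b-2a) if 0 ≤ a ≤ b ≤ 2a; (a, b-2a) if 2a ≤ b and b ≥ 0; (a+b, -2a-b) if a ≤ 0 and b ≤ 0. Then t_c is a well-defined bijection of ℤ² (the pieces agree on overlaps), with fixed points exactly the points (0,b) with b ≥ 0. -/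
/-- The Dynnikov-plane action of the Dehn twist `t_c`, defined piecewise. -/
def tc (x : ℤ × ℤ) : ℤ × ℤ :=
  if 0 ≤ x.1 ∧ x.2 ≤ x.1 then (x.2 - x.1, -x.2)
  else if 0 ≤ x.1 ∧ x.1 ≤ x.2 ∧ x.2 ≤ 2 * x.1 then (x.2 - x.1, x.2 - 2 * x.1)
  else if 2 * x.1 ≤ x.2 ∧ 0 ≤ x.2 then (x.1, x.2 - 2 * x.1)
  else (x.1 + x.2, -2 * x.1 - x.2)

/-- Explicit inverse of `tc`. -/
def tci (x : ℤ × ℤ) : ℤ × ℤ :=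
  if x.1 ≤ 0 ∧ x.1 + x.2 ≤ 0 then (-x.1 - x.2, -x.2)
  else if 0 ≤ x.1 ∧ x.2 ≤ 0 then (x.1 - x.2, 2 * x.1 - x.2)
  else if 0 ≤ x.2 ∧ 0 ≤ x.2 + 2 * x.1 then (x.1, x.2 + 2 * x.1)
  else (-(x.1 + x.2), 2 * x.1 + x.2)

lemma tci_tc (x : ℤ × ℤ) : tci (tc x) = x := by
  rcases x with ⟨a, b⟩
  simp only [tc]
  split_ifs with h1 h2 h3 <;>
    · simp only [tci, Prod.mk.injEq]
      split_ifs <;> · rw [Prod.mk.injEq]; omega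

lemma tc_tci (x : ℤ × ℤ) : tc (tci x) = x := by
  rcases x with ⟨a, b⟩
  simp only [tci]
  split_ifs with h1 h2 h3 <;>
    · simp only [tc, Prod.mk.injEq]
      split_ifs <;> · rw [Prod.mk.injEq]; omega

/-- `t_c` is well defined (each of the four regional formulas holds on
its whole region, so the pieces agree on overlaps), it is a bijection of `ℤ²`, and
its fixed points are exactly the points `(0,b)` with `b ≥ 0`. -/
theorem stmt16 :
    (∀ a b : ℤ, 0 ≤ a → b ≤ a → tc (a, b) = (b - a, -b)) ∧
    (∀ a b : ℤ, 0 ≤ a → a ≤ b → b ≤ 2 * a → tc (a, b) = (b - a, b - 2 * a)) ∧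
    (∀ a b : ℤ, 2 * a ≤ b → 0 ≤ b → tc (a, b) = (a, b - 2 * a)) ∧
    (∀ a b : ℤ, a ≤ 0 → b ≤ 0 → tc (a, b) = (a + b, -2 * a - b)) ∧
    Function.Bijective tc ∧
    (∀ x : ℤ × ℤ, tc x = x ↔ (x.1 = 0 ∧ 0 ≤ x.2)) := by
  refine ⟨?_, ?_, ?_, ?_, ?_, ?_⟩
  · intro a b h1 h2
    simp only [tc]
    split_ifs <;> · rw [Prod.mk.injEq]; omega
  · intro a b h1 h2 h3
    simp only [tc]
    split_ifs <;> · rw [Prod.mk.injEq]; omega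
  · intro a b h1 h2
    simp only [tc]
    split_ifs <;> · rw [Prod.mk.injEq]; omega
  · intro a b h1 h2
    simp only [tc]
    split_ifs <;> · rw [Prod.mk.injEq]; omega
  · exact Function.bijective_iff_has_inverse.mpr ⟨tci, tci_tc, tc_tci⟩
  · intro x
    rcases x with ⟨a, b⟩
    simp only [tc, Prod.mk.injEq]
    split_ifs <;> constructor <;> intro h <;> simp_all <;> omega
end

section
/- Let Φ(p,q) = ((|p-q|-|p+q|)/2, |p|-|q|) and let U² = [[1,2],[0,1]] act on ℤ² by matrix multiplication. Define t_c : ℤ² → ℤ² piecewise by t_c(a,b) = (b-a,-b) if a ≥ 0, b ≤ a; (b-a,b-2a) if 0 ≤ a ≤ b ≤ 2a; (a,b-2a) if 2a ≤ b, b ≥ 0; (a+b,-2a-b) if a ≤ 0, b ≤ 0. Then Φ intertwines the actions: Φ(U²·(p,q)) = t_c(Φ(p,q)) for all (p,q) ∈ ℤ². -/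
set_option maxHeartbeats 1000000 in
/-- `Φ` intertwines the action of `U² = [[1,2],[0,1]]`
(i.e. `(p,q) ↦ (p+2q, q)`) on torus coordinates with the action of `t_c` on
Dynnikov coordinates: `Φ(U²·(p,q)) = t_c(Φ(p,q))`. -/
theorem stmt18 (p q : ℤ) : Phi (p + 2 * q, q) = tc (Phi (p, q)) := by
  simp only [Phi, tc, Prod.mk.injEq]
  rw [show p + 2 * q - q = p + q by ring, show p + 2 * q + q = p + 3 * q by ring]
  rcases abs_cases (p - q) with ⟨h1, g1⟩ | ⟨h1, g1⟩ <;>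
  rcases abs_cases (p + q) with ⟨h2, g2⟩ | ⟨h2, g2⟩ <;>
  rcases abs_cases p with ⟨h3, g3⟩ | ⟨h3, g3⟩ <;>
  rcases abs_cases q with ⟨h4, g4⟩ | ⟨h4, g4⟩ <;>
  rcases abs_cases (p + 3 * q) with ⟨h5, g5⟩ | ⟨h5, g5⟩ <;>
  rcases abs_cases (p + 2 * q) with ⟨h6, g6⟩ | ⟨h6, g6⟩ <;>
  simp only [h1, h2, h3, h4, h5, h6] <;>
  split_ifs <;> simp only [Prod.mk.injEq, h1, h2, h3, h4, h5, h6] <;> omega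
end

section
/- For every primitive vector (p,q) ∈ ℤ² (gcd(p,q) = 1), there exists a finite sequence of multiplications by the matrices U² = [[1,2],[0,1]], U⁻², L² = [[1,0],[2,1]], L⁻² taking (p,q) to one of the vectors (0,1), (0,-1), (1,0), (-1,0), (1,1), (1,-1), (-1,1), (-1,-1). -/
open Matrix

/-- `U² = [[1,2],[0,1]]` in `SL₂(ℤ)`. -/
def U2 : Matrix.SpecialLinearGroup (Fin 2) ℤ :=
  ⟨!![1, 2; 0, 1], by norm_num [Matrix.det_fin_two_of]⟩

/-- `L² = [[1,0],[2,1]]` in `SL₂(ℤ)`. -/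
def L2 : Matrix.SpecialLinearGroup (Fin 2) ℤ :=
  ⟨!![1, 0; 2, 1], by norm_num [Matrix.det_fin_two_of]⟩

/-!
If `0 < |p| < |q|`, then one of `L^{±2}` fixes `p` and replaces `q` by `q ± 2p`, of smaller
absolute value, and symmetrically `U^{±2}` shrinks `p` when `0 < |q| < |p|`. Coprimality rules out
`p = 0` or `|p| = |q|` outside the box `{-1,0,1}²`, and is preserved by these moves, so descent
on `|p| + |q|` lands in that box. The endpoint is not `0` because `SL₂(ℤ)` acts injectively.
-/

lemma coe_U2_zpow (n : ℤ) : (U2 ^ n).1 = !![1, 2 * n; 0, 1] := by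
  induction n using Int.induction_on with
  | zero => ext i j; fin_cases i <;> fin_cases j <;> rfl
  | succ n ih =>
    rw [_root_.zpow_add_one, Matrix.SpecialLinearGroup.coe_mul, ih]
    simp only [U2, mul_fin_two]; ring_nf
  | pred n ih =>
    rw [_root_.zpow_sub_one, Matrix.SpecialLinearGroup.coe_mul,
      Matrix.SpecialLinearGroup.coe_inv, ih]
    simp only [U2, adjugate_fin_two_of, mul_fin_two]; ring_nf

lemma coe_L2_zpow (n : ℤ) : (L2 ^ n).1 = !![1, 0; 2 * n, 1] := by
  induction n using Int.induction_on with
  | zero => ext i j; fin_cases i <;> fin_cases j <;> rfl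
  | succ n ih =>
    rw [_root_.zpow_add_one, Matrix.SpecialLinearGroup.coe_mul, ih]
    simp only [L2, mul_fin_two]; ring_nf
  | pred n ih =>
    rw [_root_.zpow_sub_one, Matrix.SpecialLinearGroup.coe_mul,
      Matrix.SpecialLinearGroup.coe_inv, ih]
    simp only [L2, adjugate_fin_two_of, mul_fin_two]; ring_nf

lemma U2_zpow_mulVec (n p q : ℤ) : (U2 ^ n).1 *ᵥ ![p, q] = ![p + 2 * n * q, q] := by
  rw [coe_U2_zpow]; ext i; fin_cases i <;> simp [mulVec, dotProduct, Fin.sum_univ_two]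

lemma L2_zpow_mulVec (n p q : ℤ) : (L2 ^ n).1 *ᵥ ![p, q] = ![p, q + 2 * n * p] := by
  rw [coe_L2_zpow]; ext i; fin_cases i <;> simp [mulVec, dotProduct, Fin.sum_univ_two, add_comm]

-- Named after Sanov, who showed that `U²` and `L²` generate a free group.
abbrev sanovSubgroup : Subgroup (SpecialLinearGroup (Fin 2) ℤ) := Subgroup.closure {U2, L2}

lemma U2_mem_sanovSubgroup : U2 ∈ sanovSubgroup := Subgroup.subset_closure (by simp)

lemma L2_mem_sanovSubgroup : L2 ∈ sanovSubgroup := Subgroup.subset_closure (by simp)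

def ReachesUnitBox (v : Fin 2 → ℤ) : Prop :=
  ∃ A ∈ sanovSubgroup, ∀ i, ((A.1 *ᵥ v) i).natAbs ≤ 1

lemma ReachesUnitBox.of_mulVec {B : SpecialLinearGroup (Fin 2) ℤ} {v : Fin 2 → ℤ}
    (hB : B ∈ sanovSubgroup) (h : ReachesUnitBox (B.1 *ᵥ v)) : ReachesUnitBox v := by
  obtain ⟨A, hA, hbox⟩ := h
  refine ⟨A * B, mul_mem hA hB, ?_⟩
  rwa [Matrix.SpecialLinearGroup.coe_mul, ← mulVec_mulVec]

lemma natAbs_eq_one_of_isCoprime_of_natAbs_eq {p q : ℤ} (h : IsCoprime p q)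
    (he : p.natAbs = q.natAbs) : p.natAbs = 1 := by
  rwa [Int.isCoprime_iff_gcd_eq_one, Int.gcd_eq_natAbs, he, Nat.gcd_self, ← he] at h

lemma exists_natAbs_add_two_mul_lt_s19 {p q : ℤ} (hp : p ≠ 0) (h : p.natAbs < q.natAbs) :
    ∃ n : ℤ, (q + 2 * n * p).natAbs < q.natAbs := by
  by_cases hs : (q + 2 * p).natAbs < q.natAbs
  · exact ⟨1, by simpa using hs⟩
  · exact ⟨-1, by omega⟩

theorem reachesUnitBox_of_isCoprime {p q : ℤ} (h : IsCoprime p q) : ReachesUnitBox ![p, q] := by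
  by_cases hsmall : p.natAbs ≤ 1 ∧ q.natAbs ≤ 1
  · exact ⟨1, one_mem _, fun i => by fin_cases i <;> simp [hsmall.1, hsmall.2]⟩
  rcases lt_trichotomy p.natAbs q.natAbs with hlt | heq | hgt
  · have hp : p ≠ 0 := by
      rintro rfl
      have := Int.isUnit_iff_natAbs_eq.mp (isCoprime_zero_left.mp h)
      omega
    obtain ⟨k, hk⟩ := exists_natAbs_add_two_mul_lt_s19 hp hlt
    refine .of_mulVec (zpow_mem L2_mem_sanovSubgroup k) ?_
    rw [L2_zpow_mulVec]
    exact reachesUnitBox_of_isCoprime (h.add_mul_right_right (2 * k))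
  · have := natAbs_eq_one_of_isCoprime_of_natAbs_eq h heq
    omega
  · have hq : q ≠ 0 := by
      rintro rfl
      have := Int.isUnit_iff_natAbs_eq.mp (isCoprime_zero_right.mp h)
      omega
    obtain ⟨k, hk⟩ := exists_natAbs_add_two_mul_lt_s19 hq hgt
    refine .of_mulVec (zpow_mem U2_mem_sanovSubgroup k) ?_
    rw [U2_zpow_mulVec]
    exact reachesUnitBox_of_isCoprime (h.add_mul_right_left (2 * k))
termination_by p.natAbs + q.natAbs

lemma Matrix.SpecialLinearGroup.mulVec_ne_zero {n R : Type*} [Fintype n] [DecidableEq n]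
    [CommRing R] (A : SpecialLinearGroup n R) {v : n → R} (hv : v ≠ 0) : A.1 *ᵥ v ≠ 0 := by
  have hA : IsUnit A.1 := (isUnit_iff_isUnit_det _).2 (by rw [A.2]; exact isUnit_one)
  simpa using (mulVec_injective_of_isUnit hA).ne hv

lemma eq_of_natAbs_le_one_of_ne_zero {w : Fin 2 → ℤ} (h : ∀ i, (w i).natAbs ≤ 1)
    (hw : w ≠ 0) :
    w = ![0, 1] ∨ w = ![0, -1] ∨ w = ![1, 0] ∨ w = ![-1, 0] ∨
      w = ![1, 1] ∨ w = ![1, -1] ∨ w = ![-1, 1] ∨ w = ![-1, -1] := by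
  obtain ⟨a, b, rfl⟩ : ∃ a b : ℤ, w = ![a, b] :=
    ⟨w 0, w 1, by ext i; fin_cases i <;> rfl⟩
  obtain ⟨ha₁, ha₂⟩ : -1 ≤ a ∧ a ≤ 1 := by
    have := h 0; simp only [cons_val_zero] at this; omega
  obtain ⟨hb₁, hb₂⟩ : -1 ≤ b ∧ b ≤ 1 := by
    have := h 1; simp only [cons_val_one, cons_val_fin_one] at this; omega
  interval_cases a <;> interval_cases b <;> simp_all

/-- for every primitive `(p,q) ∈ ℤ²`, some finite product of the
matrices `U², U⁻², L², L⁻²` (i.e. some element of the subgroup generated by `U²` and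
`L²`) takes `(p,q)` to one of the eight terminal vectors with both coordinates in
`{-1,0,1}`. -/
theorem stmt19 (p q : ℤ) (hprim : IsCoprime p q) :
    ∃ A ∈ Subgroup.closure ({U2, L2} : Set (Matrix.SpecialLinearGroup (Fin 2) ℤ)),
      A.1.mulVec ![p, q] = ![0, 1] ∨ A.1.mulVec ![p, q] = ![0, -1] ∨
      A.1.mulVec ![p, q] = ![1, 0] ∨ A.1.mulVec ![p, q] = ![-1, 0] ∨
      A.1.mulVec ![p, q] = ![1, 1] ∨ A.1.mulVec ![p, q] = ![1, -1] ∨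
      A.1.mulVec ![p, q] = ![-1, 1] ∨ A.1.mulVec ![p, q] = ![-1, -1] := by
  obtain ⟨A, hA, hbox⟩ := reachesUnitBox_of_isCoprime hprim
  have hv : ![p, q] ≠ 0 := by
    rintro hv
    simp only [Matrix.cons_eq_zero_iff, Matrix.zero_empty, and_true] at hv
    exact not_isCoprime_zero_zero (hv.1 ▸ hv.2 ▸ hprim)
  exact ⟨A, hA, eq_of_natAbs_le_one_of_ne_zero hbox (A.mulVec_ne_zero hv)⟩
end
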